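/- arXiv:2009.01878 — 5 statements merged into one kernel-verified Lean document; each statement's English description precedes it below -/
import Mathlib

section
/- Let f : ℝ^m → ℝ be differentiable at x̄ and suppose x̄ is a local minimizer of φ(x) = f(x) + β‖Cx‖₁. Then there exists ξ ∈ ℝ^n with |ξᵢ| ≤ 1 for all i, ξᵢ = sign(⟨c_i, x̄⟩) whenever ⟨c_i, x̄⟩ ≠ 0, and ∇f(x̄) + β Cᵀξ = 0. -/
/-!
Restricting `φ` to a ray `x̄ + t d` and differentiating at `t = 0⁺` gives
`0 ≤ ⟪∇f(x̄), d⟫ + β ∑ᵢ |·|'(⟨cᵢ, x̄⟩; ⟨cᵢ, d⟩)`, and the one-sided derivative of `|·|` at `a` in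
direction `b` is `max {s b | s ∈ ∂|·|(a)}`. So for every `d` some `ξ ∈ ∏ᵢ ∂|·|(⟨cᵢ, x̄⟩)` has
`⟪-∇f(x̄)/β, d⟫ ≤ ⟪Cᵀξ, d⟫`: no hyperplane separates `-∇f(x̄)/β` from the compact convex set
`Cᵀ(∏ᵢ ∂|·|(⟨cᵢ, x̄⟩))`, which therefore contains it.
-/

open Set InnerProductSpace Matrix

theorem Real.sign_eq_coe_sign (r : ℝ) : Real.sign r = (SignType.sign r : ℝ) := by
  rcases lt_trichotomy r 0 with h | rfl | h
  · simp [Real.sign_of_neg h, h]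
  · simp
  · simp [Real.sign_of_pos h, h]

noncomputable def absDirDeriv (a b : ℝ) : ℝ := if a = 0 then |b| else Real.sign a * b

def absSubdifferential (a : ℝ) : Set ℝ := {s | |s| ≤ 1 ∧ (a ≠ 0 → s = Real.sign a)}

theorem hasDerivWithinAt_abs_add_mul (a b : ℝ) :
    HasDerivWithinAt (fun t => |a + t * b|) (absDirDeriv a b) (Ici 0) 0 := by
  unfold absDirDeriv
  split_ifs with ha
  · subst ha
    have hlin : HasDerivAt (fun t : ℝ => t * |b|) |b| 0 := by
      simpa using (hasDerivAt_id (0 : ℝ)).mul_const |b|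
    refine hlin.hasDerivWithinAt.congr (fun t ht => ?_) (by simp)
    simp [abs_mul, abs_of_nonneg (show (0 : ℝ) ≤ t from ht)]
  · have hline : HasDerivAt (fun t : ℝ => a + t * b) b 0 := by
      simpa using ((hasDerivAt_id (0 : ℝ)).mul_const b).const_add a
    rw [Real.sign_eq_coe_sign]
    exact ((hasDerivAt_abs ha).comp_of_eq 0 hline (by simp)).hasDerivWithinAt

theorem IsLocalMinOn.hasDerivWithinAt_Ici_nonneg {φ : ℝ → ℝ} {a φ' : ℝ}
    (h : IsLocalMinOn φ (Ici a) a) (hφ : HasDerivWithinAt φ φ' (Ici a) a) : 0 ≤ φ' := by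
  have hone : (1 : ℝ) ∈ posTangentConeAt (Ici a) a :=
    mem_posTangentConeAt_of_segment_subset (by
      rw [segment_eq_Icc (by linarith)]; exact Icc_subset_Ici_self)
  simpa using h.hasFDerivWithinAt_nonneg hφ.hasFDerivWithinAt hone

theorem IsLocalMin.zero_le_add_mul_sum_absDirDeriv {E ι : Type*} [NormedAddCommGroup E]
    [NormedSpace ℝ E] [Fintype ι] {f : E → ℝ} {f' : E →L[ℝ] ℝ} {x : E} (A : E →ₗ[ℝ] ι → ℝ)
    {β : ℝ} (hmin : IsLocalMin (fun y => f y + β * ∑ i, |A y i|) x) (hf : HasFDerivAt f f' x)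
    (d : E) : 0 ≤ f' d + β * ∑ i, absDirDeriv (A x i) (A d i) := by
  have hline : HasDerivAt (fun t : ℝ => x + t • d) d 0 := by
    simpa using ((hasDerivAt_id (0 : ℝ)).smul_const d).const_add x
  have hfline : HasDerivAt (fun t : ℝ => f (x + t • d)) (f' d) 0 :=
    hf.comp_hasDerivAt_of_eq 0 hline (by simp)
  have hmin' : IsLocalMin (fun y => f y + β * ∑ i, |A y i|) (x + (0 : ℝ) • d) := by simpa
  have hcont : ContinuousAt (fun t : ℝ => x + t • d) 0 := by fun_prop
  have hminline : IsLocalMinOn (fun t : ℝ => f (x + t • d) + β * ∑ i, |A x i + t * A d i|)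
      (Ici 0) 0 := by
    simpa [Function.comp_def, smul_eq_mul, mul_comm] using
      (IsLocalMin.comp_continuous (g := fun t : ℝ => x + t • d) hmin' hcont).on (Ici 0)
  exact hminline.hasDerivWithinAt_Ici_nonneg <| hfline.hasDerivWithinAt.add <|
    (HasDerivWithinAt.fun_sum (u := Finset.univ) fun i _ =>
      hasDerivWithinAt_abs_add_mul (A x i) (A d i)).const_mul β

theorem absSubdifferential_zero : absSubdifferential 0 = Icc (-1) 1 := by
  ext s
  simp [absSubdifferential, abs_le]

theorem absSubdifferential_of_ne_zero {a : ℝ} (ha : a ≠ 0) :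
    absSubdifferential a = {Real.sign a} := by
  ext s
  simp only [absSubdifferential, ha, ne_eq, not_false_eq_true, forall_const, mem_ofPred_eq,
    mem_singleton_iff, and_iff_right_iff_imp]
  rintro rfl
  rcases Real.sign_apply_eq_of_ne_zero a ha with h | h <;> simp [h]

theorem isCompact_absSubdifferential (a : ℝ) : IsCompact (absSubdifferential a) := by
  rcases eq_or_ne a 0 with rfl | ha
  · rw [absSubdifferential_zero]; exact isCompact_Icc
  · rw [absSubdifferential_of_ne_zero ha]; exact isCompact_singleton

theorem convex_absSubdifferential (a : ℝ) : Convex ℝ (absSubdifferential a) := by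
  rcases eq_or_ne a 0 with rfl | ha
  · rw [absSubdifferential_zero]; exact convex_Icc (-1) 1
  · rw [absSubdifferential_of_ne_zero ha]; exact convex_singleton (Real.sign a)

theorem exists_mem_absSubdifferential_mul_eq (a b : ℝ) :
    ∃ s ∈ absSubdifferential a, s * b = absDirDeriv a b := by
  rcases eq_or_ne a 0 with rfl | ha
  · refine ⟨Real.sign b, ?_, ?_⟩
    · rw [absSubdifferential_zero, mem_Icc, ← abs_le]
      rcases Real.sign_apply_eq b with h | h | h <;> simp [h]
    · rw [absDirDeriv, if_pos rfl, Real.sign_eq_coe_sign]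
      exact sign_mul_self b
  · exact ⟨Real.sign a, by simp [absSubdifferential_of_ne_zero ha], by simp [absDirDeriv, ha]⟩

theorem mem_image_of_forall_exists_inner_le {E F : Type*} [NormedAddCommGroup E]
    [InnerProductSpace ℝ E] [CompleteSpace E] [TopologicalSpace F] [AddCommGroup F] [Module ℝ F]
    (T : F →L[ℝ] E) {S : Set F} (hconv : Convex ℝ S) (hcpt : IsCompact S) {v : E}
    (h : ∀ w, ∃ ξ ∈ S, ⟪w, v⟫_ℝ ≤ ⟪w, T ξ⟫_ℝ) : v ∈ T '' S := by
  have hTconv : Convex ℝ (T '' S) := hconv.linear_image T.toLinearMap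
  rw [← iInter_halfSpaces_eq hTconv (hcpt.image T.continuous).isClosed]
  refine mem_iInter.2 fun l => ?_
  obtain ⟨ξ, hξ, hle⟩ := h ((toDual ℝ E).symm l)
  exact ⟨T ξ, mem_image_of_mem T hξ, by simpa [toDual_symm_apply] using hle⟩

theorem inner_toLp_vecMul {m n : Type*} [Fintype m] [Fintype n] (C : Matrix n m ℝ) (ξ : n → ℝ)
    (w : EuclideanSpace ℝ m) : ⟪w, WithLp.toLp 2 (ξ ᵥ* C)⟫_ℝ = ξ ⬝ᵥ (C *ᵥ w) := by
  rw [EuclideanSpace.inner_eq_star_dotProduct, Matrix.dotProduct_mulVec]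
  rfl

/-- First-order necessary optimality condition for a local minimizer of
`φ(x) = f(x) + β‖Cx‖₁`. -/
theorem stmt_1 (m n : ℕ) (C : Matrix (Fin n) (Fin m) ℝ) (β : ℝ) (hβ : 0 < β)
    (f : EuclideanSpace ℝ (Fin m) → ℝ) (xbar g : EuclideanSpace ℝ (Fin m))
    (hf : HasGradientAt f g xbar)
    (hmin : IsLocalMin (fun x : EuclideanSpace ℝ (Fin m) =>
      f x + β * ∑ i, |∑ j, C i j * x j|) xbar) :
    ∃ ξ : Fin n → ℝ, (∀ i, |ξ i| ≤ 1) ∧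
      (∀ i, (∑ j, C i j * xbar j) ≠ 0 → ξ i = Real.sign (∑ j, C i j * xbar j)) ∧
      (∀ j, g j + β * ∑ i, C i j * ξ i = 0) := by
  let A : EuclideanSpace ℝ (Fin m) →ₗ[ℝ] Fin n → ℝ :=
    C.mulVecLin ∘ₗ (WithLp.linearEquiv 2 ℝ (Fin m → ℝ)).toLinearMap
  let T : (Fin n → ℝ) →L[ℝ] EuclideanSpace ℝ (Fin m) := LinearMap.toContinuousLinearMap
    ((WithLp.linearEquiv 2 ℝ (Fin m → ℝ)).symm.toLinearMap ∘ₗ C.vecMulLinear)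
  have hdir := hmin.zero_le_add_mul_sum_absDirDeriv A hf.hasFDerivAt
  have hsupport : ∀ w, ∃ η ∈ univ.pi fun i => absSubdifferential (A xbar i),
      ⟪w, -β⁻¹ • g⟫_ℝ ≤ ⟪w, T η⟫_ℝ := by
    intro w
    choose η hη hηw using fun i => exists_mem_absSubdifferential_mul_eq (A xbar i) (A w i)
    have hTη : ⟪w, T η⟫_ℝ = ∑ i, absDirDeriv (A xbar i) (A w i) :=
      (inner_toLp_vecMul C η w).trans (Finset.sum_congr rfl fun i _ => hηw i)
    refine ⟨η, fun i _ => hη i, ?_⟩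
    rw [hTη, inner_smul_right, real_inner_comm, ← toDual_apply_apply, neg_mul, neg_le,
      ← div_eq_inv_mul, le_div_iff₀ hβ]
    linarith [hdir w]
  obtain ⟨ξ, hξ, hTξ⟩ := mem_image_of_forall_exists_inner_le T
    (convex_pi fun i _ => convex_absSubdifferential (A xbar i))
    (isCompact_univ_pi fun i => isCompact_absSubdifferential (A xbar i)) hsupport
  refine ⟨ξ, fun i => (hξ i trivial).1, fun i => (hξ i trivial).2, fun j => ?_⟩
  have hj : ∑ i, ξ i * C i j = -β⁻¹ * g j := congrArg (· j) hTξ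
  simp_rw [mul_comm (C _ j), hj]
  field_simp
  ring
end

section
/- Let γ > 0 and define the Huber function h_γ : ℝ → ℝ by h_γ(t) = γt²/2 if |t| ≤ 1/γ and h_γ(t) = |t| − 1/(2γ) if |t| > 1/γ. Then the map H : ℝ^m → ℝ, H(x) = Σ_{i=1}^n h_γ(⟨c_i, x⟩), is differentiable on ℝ^m and its gradient at x is ∇H(x) = Σ_{i=1}^n ( ⟨c_i, x⟩ / max(1/γ, |⟨c_i, x⟩|) ) c_iᵀ, i.e. ∇H(x) = Cᵀ v where vᵢ = ⟨c_i, x⟩ / max(1/γ, |⟨c_i, x⟩|). -/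
/-!
With `a = 1/γ`, the Huber function is `h_γ(t) = γ/2 · (t² - (t - a)₊² - (-t - a)₊²)`, and
`u ↦ u₊²` is differentiable everywhere with derivative `2u₊` (at `0` because this derivative is
continuous there). So `h_γ` is differentiable with derivative `γ · clamp(t, -a, a) = t / max(a, |t|)`,
and the chain rule along the rows of `C` gives the gradient `Cᵀ v`.
-/

open Filter Topology

noncomputable def huber (γ t : ℝ) : ℝ :=
  if |t| ≤ 1 / γ then γ * t ^ 2 / 2 else |t| - 1 / (2 * γ)

theorem hasDerivAt_max_zero_sq (u : ℝ) :
    HasDerivAt (fun v : ℝ => max v 0 ^ 2) (2 * max u 0) u := by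
  refine hasDerivAt_of_hasDerivAt_of_ne' (g := fun v => 2 * max v 0) (x := 0) (fun v hv => ?_)
    (by fun_prop) (by fun_prop) u
  rcases hv.lt_or_gt with hneg | hpos
  · have hloc : (fun w : ℝ => max w 0 ^ 2) =ᶠ[𝓝 v] fun _ => 0 := by
      filter_upwards [eventually_lt_nhds hneg] with w hw
      simp [max_eq_right hw.le]
    simpa [max_eq_right hneg.le] using (hasDerivAt_const v (0 : ℝ)).congr_of_eventuallyEq hloc
  · have hloc : (fun w : ℝ => max w 0 ^ 2) =ᶠ[𝓝 v] fun w => w ^ 2 := by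
      filter_upwards [eventually_gt_nhds hpos] with w hw
      rw [max_eq_left hw.le]
    simpa [max_eq_left hpos.le] using (hasDerivAt_pow 2 v).congr_of_eventuallyEq hloc

theorem huber_eq_sq_sub_max_zero_sq {γ : ℝ} (hγ : 0 < γ) (t : ℝ) :
    huber γ t = γ / 2 * (t ^ 2 - max (t - 1 / γ) 0 ^ 2 - max (-t - 1 / γ) 0 ^ 2) := by
  have ha : 0 < 1 / γ := by positivity
  unfold huber
  split_ifs with h
  · rw [abs_le] at h
    rw [max_eq_right (by linarith), max_eq_right (by linarith)]
    ring
  · rw [not_le] at h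
    rcases le_or_gt 0 t with ht | ht
    · rw [abs_of_nonneg ht] at h ⊢
      rw [max_eq_left (by linarith), max_eq_right (by linarith)]
      field_simp
      ring
    · rw [abs_of_neg ht] at h ⊢
      rw [max_eq_right (by linarith), max_eq_left (by linarith)]
      field_simp
      ring

theorem mul_sub_max_zero_add_max_zero_eq_div_max_abs {γ : ℝ} (hγ : 0 < γ) (t : ℝ) :
    γ * (t - max (t - 1 / γ) 0 + max (-t - 1 / γ) 0) = t / max (1 / γ) |t| := by
  have ha : 0 < 1 / γ := by positivity
  rcases le_or_gt |t| (1 / γ) with h | h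
  · rw [max_eq_left h, max_eq_right, max_eq_right] <;> [field_simp; skip; skip] <;>
      linarith [abs_le.mp h]
  · rw [max_eq_right h.le]
    rcases le_or_gt 0 t with ht | ht
    · rw [abs_of_nonneg ht] at h ⊢
      rw [max_eq_left (by linarith), max_eq_right (by linarith), div_self (by linarith)]
      field_simp
      ring
    · rw [abs_of_neg ht] at h ⊢
      rw [max_eq_right (by linarith), max_eq_left (by linarith), div_neg, div_self (by linarith)]
      field_simp
      ring

theorem hasDerivAt_huber {γ : ℝ} (hγ : 0 < γ) (t : ℝ) :
    HasDerivAt (huber γ) (t / max (1 / γ) |t|) t := by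
  have hsq : HasDerivAt (fun s : ℝ => s ^ 2) (2 * t) t := by simpa using hasDerivAt_pow 2 t
  have hright : HasDerivAt (fun s => max (s - 1 / γ) 0 ^ 2) (2 * max (t - 1 / γ) 0) t := by
    simpa [Function.comp_def] using
      (hasDerivAt_max_zero_sq _).comp t ((hasDerivAt_id t).sub_const (1 / γ))
  have hleft : HasDerivAt (fun s => max (-s - 1 / γ) 0 ^ 2) (-(2 * max (-t - 1 / γ) 0)) t := by
    simpa [Function.comp_def] using
      (hasDerivAt_max_zero_sq _).comp t ((hasDerivAt_neg t).sub_const (1 / γ))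
  rw [← mul_sub_max_zero_add_max_zero_eq_div_max_abs hγ, funext (huber_eq_sq_sub_max_zero_sq hγ)]
  exact (((hsq.fun_sub hright).fun_sub hleft).const_mul (γ / 2)).congr_deriv (by ring)

theorem hasGradientAt_sum_comp_matrix_rows {ι κ : Type*} [Fintype ι] [Fintype κ]
    (C : Matrix ι κ ℝ) {f : ι → ℝ → ℝ} {f' : ι → ℝ} (x : EuclideanSpace ℝ κ)
    (hf : ∀ i, HasDerivAt (f i) (f' i) (∑ j, C i j * x j)) :
    HasGradientAt (fun y : EuclideanSpace ℝ κ => ∑ i, f i (∑ j, C i j * y j))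
      (WithLp.toLp 2 (fun j => ∑ i, f' i * C i j)) x := by
  set row : ι → EuclideanSpace ℝ κ := fun i => WithLp.toLp 2 (C i)
  have hrow : ∀ i (y : EuclideanSpace ℝ κ), ∑ j, C i j * y j = innerSL ℝ (row i) y := by
    intro i y
    simp [row, PiLp.inner_apply, mul_comm]
  have hsum : HasFDerivAt (fun y : EuclideanSpace ℝ κ => ∑ i, f i (∑ j, C i j * y j))
      (∑ i, f' i • innerSL ℝ (row i)) x := by
    refine HasFDerivAt.fun_sum fun i _ => ?_
    simp only [hrow] at hf ⊢
    exact (hf i).comp_hasFDerivAt x (innerSL ℝ (row i)).hasFDerivAt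
  rw [hasGradientAt_iff_hasFDerivAt]
  refine hsum.congr_fderiv (ContinuousLinearMap.ext fun y => ?_)
  simp only [sum_apply, smul_apply, coe_innerSL_apply,
    PiLp.inner_apply, RCLike.inner_apply, Real.ringHom_apply, smul_eq_mul, Finset.mul_sum,
    InnerProductSpace.toDual_apply_apply, map_sum, row]
  rw [Finset.sum_comm]
  exact Finset.sum_congr rfl fun _ _ => Finset.sum_congr rfl fun _ _ => by ring

/-- The Huber regularization `H(x) = Σᵢ h_γ(⟨cᵢ, x⟩)` of `‖C·‖₁` is
differentiable with gradient `∇H(x) = Cᵀ v`, `vᵢ = ⟨cᵢ,x⟩ / max(1/γ, |⟨cᵢ,x⟩|)`. -/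
theorem stmt_6 (m n : ℕ) (C : Matrix (Fin n) (Fin m) ℝ) (γ : ℝ) (hγ : 0 < γ)
    (x : EuclideanSpace ℝ (Fin m)) :
    HasGradientAt (fun y : EuclideanSpace ℝ (Fin m) => ∑ i, huber γ (∑ j, C i j * y j))
      (WithLp.toLp 2 (fun j => ∑ i, ((∑ k, C i k * x k) / max (1 / γ) |∑ k, C i k * x k|) * C i j) :
        EuclideanSpace ℝ (Fin m)) x :=
  hasGradientAt_sum_comp_matrix_rows C x fun _ => hasDerivAt_huber hγ _
end

section
/- Let S ⊆ {1,…,n}, let x, d ∈ ℝ^m, s > 0, let Π be a real m×m matrix, and set x⁺ = (I − Π)(x + s d). Assume: (a) ⟨c_i, x⁺⟩ = 0 for every i ∈ S; (b) Πx = 0; (c) ξ ∈ ℝ^n satisfies, for every i ∉ S, |⟨c_i, x + s d⟩| = ξᵢ ⟨c_i, x + s d⟩ and ξᵢ ⟨c_i, x⟩ = |⟨c_i, x⟩|. Then Σ_{i=1}^n ( |⟨c_i, x⁺⟩| − |⟨c_i, x⟩| ) ≤ s Σ_{i ∉ S} ( ξᵢ ⟨c_i, d⟩ + |⟨c_i,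 Π d⟩| ). -/
open Matrix

/-- key estimate for the change of the composite `1`-norm term under the
projected update `x⁺ = (I − Π)(x + s d)`. -/
theorem stmt_14 (m n : ℕ) (C : Matrix (Fin n) (Fin m) ℝ) (S : Finset (Fin n))
    (x d : Fin m → ℝ) (s : ℝ) (hs : 0 < s)
    (Pr : Matrix (Fin m) (Fin m) ℝ) (ξ : Fin n → ℝ) (xp : Fin m → ℝ)
    (hxp : xp = ((1 : Matrix (Fin m) (Fin m) ℝ) - Pr).mulVec (x + s • d))
    (ha : ∀ i ∈ S, (∑ j, C i j * xp j) = 0)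
    (hb : Pr.mulVec x = 0)
    (hc : ∀ i ∉ S,
      |∑ j, C i j * (x j + s * d j)| = ξ i * (∑ j, C i j * (x j + s * d j)) ∧
      ξ i * (∑ j, C i j * x j) = |∑ j, C i j * x j|) :
    ∑ i, (|∑ j, C i j * xp j| - |∑ j, C i j * x j|) ≤
      s * ∑ i ∈ Finset.univ \ S,
        (ξ i * (∑ j, C i j * d j) + |∑ j, C i j * (Pr.mulVec d) j|) := by
  have hxp' : ∀ j, xp j = (x j + s * d j) - s * (Pr.mulVec d) j := by
    intro j
    have h1 : Pr.mulVec (x + s • d) = s • Pr.mulVec d := by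
      rw [mulVec_add, hb, mulVec_smul]
      simp
    have := congrFun hxp j
    simp only [sub_mulVec, one_mulVec, Pi.sub_apply, h1] at this
    simpa using this
  have key : ∀ i ∉ S, |∑ j, C i j * xp j| - |∑ j, C i j * x j| ≤
      s * (ξ i * (∑ j, C i j * d j) + |∑ j, C i j * (Pr.mulVec d) j|) := by
    intro i hi
    obtain ⟨h1, h2⟩ := hc i hi
    have e1 : (∑ j, C i j * xp j) =
        (∑ j, C i j * (x j + s * d j)) - s * ∑ j, C i j * (Pr.mulVec d) j := by
      rw [Finset.mul_sum, ← Finset.sum_sub_distrib]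
      refine Finset.sum_congr rfl fun j _ => ?_
      rw [hxp' j]; ring
    have e2 : (∑ j, C i j * (x j + s * d j)) =
        (∑ j, C i j * x j) + s * ∑ j, C i j * d j := by
      rw [Finset.mul_sum, ← Finset.sum_add_distrib]
      refine Finset.sum_congr rfl fun j _ => ?_; ring
    have habs : |∑ j, C i j * xp j| ≤
        |∑ j, C i j * (x j + s * d j)| + s * |∑ j, C i j * (Pr.mulVec d) j| := by
      rw [e1]
      calc _ ≤ |∑ j, C i j * (x j + s * d j)| + |s * ∑ j, C i j * (Pr.mulVec d) j| :=
              abs_sub _ _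
        _ = _ := by rw [abs_mul, abs_of_pos hs]
    have : |∑ j, C i j * xp j| ≤ |∑ j, C i j * x j| +
        s * (ξ i * (∑ j, C i j * d j) + |∑ j, C i j * (Pr.mulVec d) j|) := by
      calc |∑ j, C i j * xp j| ≤ _ := habs
        _ = ξ i * (∑ j, C i j * (x j + s * d j)) + s * |∑ j, C i j * (Pr.mulVec d) j| := by
            rw [h1]
        _ = ξ i * (∑ j, C i j * x j) + s * (ξ i * (∑ j, C i j * d j) +
              |∑ j, C i j * (Pr.mulVec d) j|) := by rw [e2]; ring
        _ = _ := by rw [h2]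
    linarith
  have hsplit : ∑ i, (|∑ j, C i j * xp j| - |∑ j, C i j * x j|) =
      (∑ i ∈ Finset.univ \ S, (|∑ j, C i j * xp j| - |∑ j, C i j * x j|)) +
      ∑ i ∈ S, (|∑ j, C i j * xp j| - |∑ j, C i j * x j|) := by
    rw [Finset.sum_sdiff (Finset.subset_univ S)]
  rw [hsplit, Finset.mul_sum]
  have hS : ∑ i ∈ S, (|∑ j, C i j * xp j| - |∑ j, C i j * x j|) ≤ 0 := by
    apply Finset.sum_nonpos
    intro i hi
    rw [ha i hi]
    simp [abs_nonneg]
  have hSc : ∑ i ∈ Finset.univ \ S, (|∑ j, C i j * xp j| - |∑ j, C i j * x j|) ≤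
      ∑ i ∈ Finset.univ \ S,
        s * (ξ i * (∑ j, C i j * d j) + |∑ j, C i j * (Pr.mulVec d) j|) := by
    exact Finset.sum_le_sum fun i hi => key i (Finset.mem_sdiff.mp hi).2
  linarith
end

section
/- (Kurdyka–Łojasiewicz convergence mechanism.) Let {x^k}_{k∈ℕ} ⊂ ℝ^m, {d^k}_{k∈ℕ} ⊂ ℝ^m, let φ : ℝ^m → ℝ, and let μ, c, Ĉ > 0 and θ ∈ (0,1). Assume: (a) φ(x^{k+1}) + μ‖d^k‖₂² ≤ φ(x^k) for all k; (b) ‖x^{k+1} − x^k‖₂ ≤ c‖d^k‖₂ for all k; (c) the sequence φ(x^k) converges to some φ_∞ ∈ ℝ; (d) (φ(x^k) − φ_∞)^θ ≤ Ĉ‖d^k‖₂ for all k. Then Σ_{k=0}^∞ ‖d^k‖₂ < ∞, the sequence {x^k} is a Cauchy sequence, and {x^k} converges to some x̄ ∈ ℝ^m. -/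
/-!
Put `E k = φ (x k) - φ∞ ≥ 0` and `g k = E k ^ (1 - θ)`. Concavity of `t ↦ t ^ (1 - θ)`
together with sufficient decrease and the KL inequality gives the telescoping bound
`μ (1 - θ) ‖d k‖ ≤ Ĉ (g k - g (k + 1))`, so `∑ ‖d k‖ ≤ Ĉ g 0 / (μ (1 - θ))`. The steps
`‖x (k + 1) - x k‖ ≤ c ‖d k‖` are then summable, hence `x` is Cauchy and converges.
-/

namespace Real

/-- The tangent-line inequality for the concave map `t ↦ t ^ (1 - θ)` at `a`, multiplied
through by `a ^ θ`; after expanding it is the weighted AM-GM inequality. -/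
lemma one_sub_mul_sub_le_rpow_mul_sub_rpow {θ a b : ℝ} (hθ0 : 0 ≤ θ) (hθ1 : θ ≤ 1)
    (ha : 0 ≤ a) (hb : 0 ≤ b) :
    (1 - θ) * (a - b) ≤ a ^ θ * (a ^ (1 - θ) - b ^ (1 - θ)) := by
  have hsplit : a ^ θ * a ^ (1 - θ) = a := by
    rw [← rpow_add' ha (by norm_num), add_sub_cancel, rpow_one]
  have hamgm : a ^ θ * b ^ (1 - θ) ≤ θ * a + (1 - θ) * b :=
    geom_mean_le_arith_mean2_weighted hθ0 (sub_nonneg.2 hθ1) ha hb (by ring)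
  rw [mul_sub (a ^ θ), hsplit]
  linarith

lemma mul_one_sub_mul_le_mul_rpow_sub_rpow {μ C θ a b r : ℝ} (hμ : 0 ≤ μ) (hC : 0 ≤ C)
    (hθ0 : 0 ≤ θ) (hθ1 : θ ≤ 1) (hb : 0 ≤ b) (hr : 0 ≤ r)
    (hdec : b + μ * r ^ 2 ≤ a) (hKL : a ^ θ ≤ C * r) :
    μ * (1 - θ) * r ≤ C * (a ^ (1 - θ) - b ^ (1 - θ)) := by
  have hμr : 0 ≤ μ * r ^ 2 := by positivity
  rcases (show 0 ≤ a by linarith).eq_or_lt with rfl | ha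
  · have hμr0 : μ * r = 0 := by
      rcases mul_eq_zero.1 (show μ * r ^ 2 = 0 by linarith) with h | h
      · simp [h]
      · simp [pow_eq_zero_iff two_ne_zero |>.1 h]
    rw [show b = 0 by linarith, mul_right_comm, hμr0]
    simp
  · have hconcave := one_sub_mul_sub_le_rpow_mul_sub_rpow hθ0 hθ1 ha.le hb
    have hstep : μ * r * a ^ θ ≤ C * (a - b) := by
      nlinarith [mul_le_mul_of_nonneg_left hKL (mul_nonneg hμ hr)]
    refine le_of_mul_le_mul_left ?_ (rpow_pos_of_pos ha θ)
    nlinarith [mul_le_mul_of_nonneg_left hconcave hC, sub_nonneg.2 hθ1]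

end Real

lemma summable_of_mul_le_sub_succ {r g : ℕ → ℝ} {K : ℝ} (hK : 0 < K) (hr : ∀ k, 0 ≤ r k)
    (hg : ∀ k, 0 ≤ g k) (h : ∀ k, K * r k ≤ g k - g (k + 1)) : Summable r := by
  refine summable_of_sum_range_le hr (c := g 0 / K) fun n => ?_
  rw [le_div_iff₀ hK, Finset.sum_mul]
  calc ∑ i ∈ Finset.range n, r i * K
      ≤ ∑ i ∈ Finset.range n, (g i - g (i + 1)) :=
        Finset.sum_le_sum fun i _ => by linarith [h i]
    _ = g 0 - g n := Finset.sum_range_sub' g n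
    _ ≤ g 0 := sub_le_self _ (hg n)

theorem stmt_17_general (m : ℕ) (x d : ℕ → EuclideanSpace ℝ (Fin m))
    (φ : EuclideanSpace ℝ (Fin m) → ℝ)
    (μ c Chat : ℝ) (hμ : 0 < μ) (hChat : 0 < Chat)
    (θ : ℝ) (hθ : θ ∈ Set.Ioo (0 : ℝ) 1)
    (ha : ∀ k : ℕ, φ (x (k + 1)) + μ * ‖d k‖ ^ 2 ≤ φ (x k))
    (hb : ∀ k : ℕ, ‖x (k + 1) - x k‖ ≤ c * ‖d k‖)
    (φinf : ℝ) (hconv : Filter.Tendsto (fun k => φ (x k)) Filter.atTop (nhds φinf))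
    (hKL : ∀ k : ℕ, (φ (x k) - φinf) ^ θ ≤ Chat * ‖d k‖) :
    (Summable fun k : ℕ => ‖d k‖) ∧ CauchySeq x ∧
      ∃ xbar : EuclideanSpace ℝ (Fin m), Filter.Tendsto x Filter.atTop (nhds xbar) := by
  obtain ⟨hθ0, hθ1⟩ := hθ
  have hanti : Antitone fun k => φ (x k) :=
    antitone_nat_of_succ_le fun k => by nlinarith [ha k, sq_nonneg ‖d k‖]
  have hgap : ∀ k, 0 ≤ φ (x k) - φinf := fun k => sub_nonneg.2 (hanti.le_of_tendsto hconv k)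
  have hsum : Summable fun k => ‖d k‖ := by
    refine summable_of_mul_le_sub_succ (mul_pos hμ (sub_pos.2 hθ1)) (fun k => norm_nonneg _)
      (g := fun k => Chat * (φ (x k) - φinf) ^ (1 - θ))
      (fun k => mul_nonneg hChat.le (Real.rpow_nonneg (hgap k) _)) fun k => ?_
    rw [← mul_sub]
    exact Real.mul_one_sub_mul_le_mul_rpow_sub_rpow hμ.le hChat.le hθ0.le hθ1.le (hgap (k + 1))
      (norm_nonneg _) (by linarith [ha k]) (hKL k)
  have hcauchy : CauchySeq x := cauchySeq_of_summable_dist <|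
    .of_nonneg_of_le (fun _ => dist_nonneg) (fun k => by rw [dist_comm, dist_eq_norm]; exact hb k)
      (hsum.mul_left c)
  exact ⟨hsum, hcauchy, cauchySeq_tendsto_of_complete hcauchy⟩

/-- Kurdyka–Łojasiewicz convergence mechanism: sufficient decrease,
the step bound, convergence of the values and the KL-type inequality imply summability
of `‖d^k‖₂`, the Cauchy property and convergence of the iterates. -/
theorem stmt_17 (m : ℕ) (x d : ℕ → EuclideanSpace ℝ (Fin m))
    (φ : EuclideanSpace ℝ (Fin m) → ℝ)
    (μ c Chat : ℝ) (hμ : 0 < μ) (hc : 0 < c) (hChat : 0 < Chat)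
    (θ : ℝ) (hθ : θ ∈ Set.Ioo (0 : ℝ) 1)
    (ha : ∀ k : ℕ, φ (x (k + 1)) + μ * ‖d k‖ ^ 2 ≤ φ (x k))
    (hb : ∀ k : ℕ, ‖x (k + 1) - x k‖ ≤ c * ‖d k‖)
    (φinf : ℝ) (hconv : Filter.Tendsto (fun k => φ (x k)) Filter.atTop (nhds φinf))
    (hKL : ∀ k : ℕ, (φ (x k) - φinf) ^ θ ≤ Chat * ‖d k‖) :
    (Summable fun k : ℕ => ‖d k‖) ∧ CauchySeq x ∧
      ∃ xbar : EuclideanSpace ℝ (Fin m), Filter.Tendsto x Filter.atTop (nhds xbar) :=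
  stmt_17_general m x d φ μ c Chat hμ hChat θ hθ ha hb φinf hconv hKL
end

section
/- (Rate-of-convergence sequence lemma.) Let θ ∈ (0,1), M > 0, and let (Δ_n)_{n≥0} be a nonincreasing sequence of nonnegative real numbers converging to 0 such that Δ_n ≤ M (Δ_{n−1} − Δ_n)^{(1−θ)/θ} + (Δ_{n−1} − Δ_n) for all n ≥ 1. Then: (i) if θ ∈ (0, 1/2), there exist c > 0 and τ ∈ [0,1) such that Δ_n ≤ c τ^n for all n; (ii) if θ ∈ (1/2, 1), there exists c > 0 such that Δ_n ≤ c n^{−(1−θ)/(2θ−1)} for all n ≥ 1. -/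
/-! Write `d_n = Δ_{n-1} - Δ_n` and `α = (1-θ)/θ`. Since `Δ_n → 0`, eventually `d_n ≤ 1`, so
`d_n^α ≤ d_n` when `θ < 1/2` and `d_n ≤ d_n^α` when `θ > 1/2`. In the first case the recursion
becomes `Δ_n ≤ (M+1) d_n`, i.e. the contraction `Δ_n ≤ (M+1)/(M+2) Δ_{n-1}`. In the second it
becomes `Δ_n^β ≤ (M+1)^β d_n` with `β = 1/α > 1`, which makes `Δ_n^{1-β}` grow by at least a
fixed amount at every step (compare `t ↦ t^{1-β}` with its tangent when `Δ_n ≥ Δ_{n-1}/2`, and use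
`Δ_n^{1-β} ≥ 2^{β-1} Δ_{n-1}^{1-β}` otherwise). Hence `Δ_n^{1-β} ≳ n`, that is
`Δ_n ≲ n^{-1/(β-1)}`. In both cases the finitely many initial terms are absorbed into the
constant. -/

open Filter Set

lemma exists_pos_forall_le_mul_of_forall_ge {u g : ℕ → ℝ} {m N : ℕ} {c : ℝ} (hu : Antitone u)
    (hg : AntitoneOn g (Ici m)) (hg0 : ∀ n, 0 ≤ g n) (hgN : 0 < g N)
    (h : ∀ n ≥ N, u n ≤ c * g n) : ∃ c' > 0, ∀ n ≥ m, u n ≤ c' * g n := by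
  set c' := max 1 (max c (u m / g N))
  refine ⟨c', by positivity, fun n hmn => ?_⟩
  rcases le_or_gt N n with hNn | hnN
  · calc u n ≤ c * g n := h n hNn
      _ ≤ c' * g n :=
        mul_le_mul_of_nonneg_right ((le_max_left _ _).trans (le_max_right _ _)) (hg0 n)
  · calc u n ≤ u m := hu hmn
      _ = u m / g N * g N := by field_simp
      _ ≤ c' * g N :=
        mul_le_mul_of_nonneg_right ((le_max_right _ _).trans (le_max_right _ _)) hgN.le
      _ ≤ c' * g n :=
        mul_le_mul_of_nonneg_left (hg hmn (hmn.trans hnN.le) hnN.le) (by positivity)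

lemma le_div_pow_mul_pow_of_succ_le_mul {u : ℕ → ℝ} {τ : ℝ} {N : ℕ} (hτ : 0 < τ)
    (h : ∀ n ≥ N, u (n + 1) ≤ τ * u n) : ∀ n ≥ N, u n ≤ u N / τ ^ N * τ ^ n := by
  intro n hn
  induction n, hn using Nat.le_induction with
  | base => rw [div_mul_cancel₀ _ (pow_pos hτ N).ne']
  | succ n hn ih =>
    calc u (n + 1) ≤ τ * u n := h n hn
      _ ≤ τ * (u N / τ ^ N * τ ^ n) := mul_le_mul_of_nonneg_left ih hτ.le
      _ = u N / τ ^ N * τ ^ (n + 1) := by ring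

theorem exists_geometric_bound_of_le_mul_sub {u : ℕ → ℝ} {C : ℝ} {N : ℕ} (hC : 0 < C)
    (hu : Antitone u) (h : ∀ n ≥ N, u (n + 1) ≤ C * (u n - u (n + 1))) :
    ∃ c > 0, ∃ τ, 0 ≤ τ ∧ τ < 1 ∧ ∀ n, u n ≤ c * τ ^ n := by
  set τ := C / (C + 1)
  have hτ0 : 0 < τ := by positivity
  have hτ1 : τ < 1 := (div_lt_one (by linarith)).2 (by linarith)
  have hcontr : ∀ n ≥ N, u (n + 1) ≤ τ * u n := fun n hn => by
    rw [div_mul_eq_mul_div, le_div_iff₀ (by linarith)]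
    linarith [h n hn]
  obtain ⟨c, hc, hbound⟩ := exists_pos_forall_le_mul_of_forall_ge (m := 0) hu
    (fun _ _ _ _ hab => pow_le_pow_of_le_one hτ0.le hτ1.le hab) (fun n => by positivity)
    (pow_pos hτ0 N) (le_div_pow_mul_pow_of_succ_le_mul hτ0 hcontr)
  exact ⟨c, hc, τ, hτ0.le, hτ1, fun n => hbound n n.zero_le⟩

section Sublinear

variable {a b β K : ℝ}

/-- The tangent-line inequality for the convex function `t ↦ t ^ (1 - β)` at `b`. -/
lemma mul_sub_div_rpow_le_rpow_one_sub_sub (hβ : 1 ≤ β) (ha : 0 < a) (hab : a ≤ b) :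
    (β - 1) * (b - a) / b ^ β ≤ a ^ (1 - β) - b ^ (1 - β) := by
  rcases hab.eq_or_lt with rfl | hab
  · simp
  have hderiv : ∀ x, 0 < x → HasDerivAt (fun t : ℝ => t ^ (1 - β)) ((1 - β) * x ^ (-β)) x :=
    fun x hx => by
      simpa using Real.hasDerivAt_rpow_const (p := 1 - β) (Or.inl hx.ne')
  obtain ⟨c, ⟨hac, hcb⟩, hslope⟩ := exists_hasDerivAt_eq_slope (fun t : ℝ => t ^ (1 - β))
    (fun x => (1 - β) * x ^ (-β)) hab
    (fun x hx => (hderiv x (ha.trans_le hx.1)).continuousAt.continuousWithinAt)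
    (fun x hx => hderiv x (ha.trans hx.1))
  have hc : 0 < c := ha.trans hac
  have hmvt : a ^ (1 - β) - b ^ (1 - β) = (β - 1) * c ^ (-β) * (b - a) := by
    rw [eq_div_iff (sub_ne_zero.2 hab.ne')] at hslope
    linarith
  calc (β - 1) * (b - a) / b ^ β = (β - 1) * b ^ (-β) * (b - a) := by
        rw [Real.rpow_neg (hc.trans hcb).le]; ring
    _ ≤ (β - 1) * c ^ (-β) * (b - a) :=
        mul_le_mul_of_nonneg_right (mul_le_mul_of_nonneg_left
          (Real.rpow_le_rpow_of_nonpos hc hcb.le (by linarith)) (by linarith)) (by linarith)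
    _ = a ^ (1 - β) - b ^ (1 - β) := hmvt.symm

lemma min_le_rpow_one_sub_sub_rpow_one_sub (hβ : 1 < β) (hK : 0 < K) (ha : 0 < a) (hab : a ≤ b)
    (hb : b ≤ 1) (h : a ^ β ≤ K * (b - a)) :
    min ((β - 1) / K * 2⁻¹ ^ β) (2 ^ (β - 1) - 1) ≤ a ^ (1 - β) - b ^ (1 - β) := by
  have hb0 : 0 < b := ha.trans_le hab
  rcases le_or_gt b (2 * a) with hba | hab2
  · refine (min_le_left _ _).trans ?_
    calc (β - 1) / K * 2⁻¹ ^ β ≤ (β - 1) / K * (a / b) ^ β := by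
          gcongr
          rw [le_div_iff₀ hb0]
          linarith
      _ = (β - 1) * (a ^ β / K) / b ^ β := by
          rw [Real.div_rpow ha.le hb0.le]; ring
      _ ≤ (β - 1) * (b - a) / b ^ β := by
          gcongr
          rwa [div_le_iff₀' hK]
      _ ≤ a ^ (1 - β) - b ^ (1 - β) := mul_sub_div_rpow_le_rpow_one_sub_sub hβ.le ha hab
  · refine (min_le_right _ _).trans ?_
    have h2 : 1 ≤ (2 : ℝ) ^ (β - 1) := Real.one_le_rpow (by norm_num) (by linarith)
    have h2inv : (2 : ℝ) ^ (1 - β) = (2 ^ (β - 1))⁻¹ := by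
      rw [← Real.rpow_neg zero_le_two, neg_sub]
    calc (2 : ℝ) ^ (β - 1) - 1 ≤ (2 ^ (β - 1) - 1) * b ^ (1 - β) :=
          le_mul_of_one_le_right (by linarith)
            (Real.one_le_rpow_of_pos_of_le_one_of_nonpos hb0 hb (by linarith))
      _ = (b / 2) ^ (1 - β) - b ^ (1 - β) := by
          rw [Real.div_rpow hb0.le zero_le_two, h2inv, div_inv_eq_mul]
          ring
      _ ≤ a ^ (1 - β) - b ^ (1 - β) :=
          sub_le_sub_right (Real.rpow_le_rpow_of_nonpos ha (by linarith) (by linarith)) _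

lemma mul_sub_le_rpow_of_le_rpow_succ_sub_rpow {u : ℕ → ℝ} {p ν : ℝ} {N : ℕ} (hu : Antitone u)
    (h : ∀ n ≥ N, 0 < u (n + 1) → ν ≤ u (n + 1) ^ p - u n ^ p) :
    ∀ n ≥ N, 0 < u n → ν * (n - N) ≤ u n ^ p := by
  intro n hn
  induction n, hn using Nat.le_induction with
  | base => exact fun hN => by simpa using Real.rpow_nonneg hN.le p
  | succ n hn ih =>
    intro hpos
    have hprev := ih (hpos.trans_le (hu n.le_succ))
    have hinc := h n hn hpos
    push_cast
    linarith

theorem exists_le_mul_rpow_of_rpow_le_mul_sub {u : ℕ → ℝ} {N : ℕ} (hβ : 1 < β) (hK : 0 < K)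
    (hu : Antitone u) (hu1 : ∀ n ≥ N, u n ≤ 1)
    (h : ∀ n ≥ N, u (n + 1) ^ β ≤ K * (u n - u (n + 1))) :
    ∃ c > 0, ∀ n ≥ 1, u n ≤ c * (n : ℝ) ^ (-(β - 1)⁻¹) := by
  set ν := min ((β - 1) / K * 2⁻¹ ^ β) (2 ^ (β - 1) - 1)
  have hν : 0 < ν := lt_min (by have := hβ; positivity)
    (by linarith [Real.one_lt_rpow (by norm_num : (1 : ℝ) < 2) (by linarith : 0 < β - 1)])
  have hgrowth : ∀ n ≥ N, 0 < u n → ν * (n - N) ≤ u n ^ (1 - β) :=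
    mul_sub_le_rpow_of_le_rpow_succ_sub_rpow hu fun n hn hpos =>
      min_le_rpow_one_sub_sub_rpow_one_sub hβ hK hpos (hu n.le_succ) (hu1 n hn) (h n hn)
  have hq : (1 - β)⁻¹ = -(β - 1)⁻¹ := by rw [← neg_sub, neg_inv]
  have hlate : ∀ n ≥ 2 * N + 1, u n ≤ (ν / 2) ^ (-(β - 1)⁻¹) * (n : ℝ) ^ (-(β - 1)⁻¹) := by
    intro n hn
    have hn0 : (0 : ℝ) < n := by exact_mod_cast (show 0 < n by omega)
    rcases le_or_gt (u n) 0 with hneg | hpos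
    · exact hneg.trans (by positivity)
    have hnN : (n : ℝ) / 2 ≤ n - N := by
      have : (2 * N + 1 : ℝ) ≤ n := by exact_mod_cast hn
      linarith
    rw [← Real.mul_rpow (by positivity) hn0.le, ← hq,
      Real.le_rpow_inv_iff_of_neg hpos (by positivity) (by linarith)]
    calc ν / 2 * n = ν * (n / 2) := by ring
      _ ≤ ν * (n - N) := mul_le_mul_of_nonneg_left hnN hν.le
      _ ≤ u n ^ (1 - β) := hgrowth n (by omega) hpos
  have hq0 : -(β - 1)⁻¹ ≤ 0 := by have := hβ; simp only [neg_nonpos]; positivity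
  exact exists_pos_forall_le_mul_of_forall_ge hu
    (fun a ha b _ hab =>
      Real.rpow_le_rpow_of_nonpos (by exact_mod_cast ha) (by exact_mod_cast hab) hq0)
    (fun n => by positivity) (by positivity) hlate

end Sublinear

section Recursion

variable {x d M α : ℝ}

lemma le_add_one_mul_of_le_mul_rpow_add (hM : 0 ≤ M) (hd0 : 0 ≤ d) (hd1 : d ≤ 1) (hα : 1 ≤ α)
    (h : x ≤ M * d ^ α + d) : x ≤ (M + 1) * d := by
  have : d ^ α ≤ d := by
    simpa using Real.rpow_le_rpow_of_exponent_ge' hd0 hd1 zero_le_one hα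
  nlinarith

lemma rpow_inv_le_mul_of_le_mul_rpow_add (hM : 0 ≤ M) (hx : 0 ≤ x) (hd0 : 0 ≤ d) (hd1 : d ≤ 1)
    (hα0 : 0 < α) (hα1 : α ≤ 1) (h : x ≤ M * d ^ α + d) : x ^ α⁻¹ ≤ (M + 1) ^ α⁻¹ * d := by
  have hdα : d ≤ d ^ α := by
    simpa using Real.rpow_le_rpow_of_exponent_ge' hd0 hd1 hα0.le hα1
  have hdα0 : 0 ≤ d ^ α := Real.rpow_nonneg hd0 α
  calc x ^ α⁻¹ ≤ ((M + 1) * d ^ α) ^ α⁻¹ := Real.rpow_le_rpow hx (by nlinarith) (by positivity)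
    _ = (M + 1) ^ α⁻¹ * d := by
        rw [Real.mul_rpow (by linarith) hdα0, Real.rpow_rpow_inv hd0 hα0.ne']

end Recursion

/-- Rate-of-convergence sequence lemma: a nonincreasing nonnegative
sequence `Δ_n → 0` satisfying `Δ_n ≤ M(Δ_{n−1} − Δ_n)^{(1−θ)/θ} + (Δ_{n−1} − Δ_n)`
decays linearly when `θ ∈ (0,1/2)` and like `n^{−(1−θ)/(2θ−1)}` when `θ ∈ (1/2,1)`. -/
theorem stmt_19 (θ : ℝ) (hθ : θ ∈ Set.Ioo (0 : ℝ) 1) (M : ℝ) (hM : 0 < M)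
    (Δ : ℕ → ℝ) (hnn : ∀ n, 0 ≤ Δ n) (hmono : ∀ n, Δ (n + 1) ≤ Δ n)
    (hlim : Filter.Tendsto Δ Filter.atTop (nhds 0))
    (hrec : ∀ n : ℕ, 1 ≤ n →
      Δ n ≤ M * (Δ (n - 1) - Δ n) ^ ((1 - θ) / θ) + (Δ (n - 1) - Δ n)) :
    (θ < 1 / 2 → ∃ c : ℝ, 0 < c ∧ ∃ τ : ℝ, 0 ≤ τ ∧ τ < 1 ∧ ∀ n : ℕ, Δ n ≤ c * τ ^ n) ∧
    (1 / 2 < θ → ∃ c : ℝ, 0 < c ∧ ∀ n : ℕ, 1 ≤ n →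
      Δ n ≤ c * (n : ℝ) ^ (-(1 - θ) / (2 * θ - 1))) := by
  obtain ⟨hθ0, hθ1⟩ := hθ
  have hanti : Antitone Δ := antitone_nat_of_succ_le hmono
  obtain ⟨N, hN⟩ := eventually_atTop.mp (hlim.eventually_le_const one_pos)
  have hstep n : Δ (n + 1) ≤ M * (Δ n - Δ (n + 1)) ^ ((1 - θ) / θ) + (Δ n - Δ (n + 1)) := by
    simpa using hrec (n + 1) le_add_self
  have hd0 n : 0 ≤ Δ n - Δ (n + 1) := sub_nonneg.2 (hmono n)
  have hd1 : ∀ n ≥ N, Δ n - Δ (n + 1) ≤ 1 := fun n hn => by linarith [hN n hn, hnn (n + 1)]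
  refine ⟨fun hθ2 => ?_, fun hθ2 => ?_⟩
  · have hα : 1 ≤ (1 - θ) / θ := (one_le_div hθ0).2 (by linarith)
    exact exists_geometric_bound_of_le_mul_sub (by linarith) hanti fun n hn =>
      le_add_one_mul_of_le_mul_rpow_add hM.le (hd0 n) (hd1 n hn) hα (hstep n)
  · have hα0 : 0 < (1 - θ) / θ := div_pos (by linarith) hθ0
    have hα1 : (1 - θ) / θ ≤ 1 := (div_le_one hθ0).2 (by linarith)
    have hβ : 1 < ((1 - θ) / θ)⁻¹ := (one_lt_inv₀ hα0).2 ((div_lt_one hθ0).2 (by linarith))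
    have hexp : -(1 - θ) / (2 * θ - 1) = -(((1 - θ) / θ)⁻¹ - 1)⁻¹ := by
      have : 2 * θ - 1 ≠ 0 := by linarith
      field_simp
      ring
    rw [hexp]
    exact exists_le_mul_rpow_of_rpow_le_mul_sub hβ (by positivity) hanti hN fun n hn =>
      rpow_inv_le_mul_of_le_mul_rpow_add hM.le (hnn _) (hd0 n) (hd1 n hn) hα0 hα1 (hstep n)
end
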